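/- arXiv:1702.06260 — 3 statements merged into one kernel-verified Lean document; each statement's English description precedes it below -/
import Mathlib

section
/- Let 𝒟 be a nonempty set and p, q : 𝒟 → ℝ. Suppose that for every t in an open interval I ⊆ ℝ the value f(t) := sup_{x ∈ 𝒟} ( p(x) + t q(x) ) is finite and the supremum is attained. Then f is convex on I, and for Lebesgue-almost every t ∈ I: f is differentiable at t and f′(t) = q(x⋆) for every x⋆ ∈ argmax_{x ∈ 𝒟} ( p(x) + t q(x) ); in particular, for all such t, any two maximizers x⋆, x̃⋆ satisfy q(x⋆) = q(x̃⋆) and p(x⋆) = p(x̃⋆). -/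
/-!
The value function `f t = ⨆ x, p x + t * q x` is a pointwise supremum of affine functions, hence
convex on `I`; a convex function on an open set is locally Lipschitz, so by Rademacher's theorem
it is differentiable almost everywhere. At a point `t` where `f` is differentiable, every
maximizer `x` yields the affine minorant `s ↦ p x + s * q x` of `f` touching it at `t`, so its
slope `q x` must be `f' t`. Two maximizers then have the same slope and the same value at `t`,
hence the same `p`.
-/

noncomputable section

open Set Filter Topology MeasureTheory

theorem ConvexOn.ciSup {ι E : Type*} [Nonempty ι] [AddCommMonoid E] [Module ℝ E]
    {s : Set E} {f : ι → E → ℝ} (hf : ∀ i, ConvexOn ℝ s (f i))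
    (hbdd : ∀ x ∈ s, BddAbove (range fun i => f i x)) :
    ConvexOn ℝ s fun x => ⨆ i, f i x := by
  refine ⟨(hf (Classical.arbitrary ι)).1, fun x hx y hy a b ha hb hab => ciSup_le fun i => ?_⟩
  dsimp only
  calc f i (a • x + b • y) ≤ a • f i x + b • f i y := (hf i).2 hx hy ha hb hab
    _ ≤ a • (⨆ j, f j x) + b • ⨆ j, f j y := by
      gcongr
      exacts [le_ciSup (hbdd x hx) i, le_ciSup (hbdd y hy) i]

section Rademacher

variable {E : Type*} [NormedAddCommGroup E] [NormedSpace ℝ E] [FiniteDimensional ℝ E]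
  [MeasurableSpace E] [BorelSpace E] {μ : Measure E} [μ.IsAddHaarMeasure] {s : Set E}

theorem LocallyLipschitzOn.ae_differentiableAt {F : Type*} [NormedAddCommGroup F]
    [NormedSpace ℝ F] [FiniteDimensional ℝ F] {f : E → F}
    (hs : IsOpen s) (hf : LocallyLipschitzOn s f) :
    ∀ᵐ x ∂μ, x ∈ s → DifferentiableAt ℝ f x := by
  refine ae_iff.2 (measure_null_of_locally_null _ fun x hx => ?_)
  obtain ⟨K, u, hu, hlip⟩ := hf (Classical.not_imp.1 hx).1
  rw [hs.nhdsWithin_eq (Classical.not_imp.1 hx).1] at hu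
  refine ⟨_, inter_mem_nhdsWithin _ (interior_mem_nhds.2 hu), ?_⟩
  refine measure_mono_null ?_ (ae_iff.1 (hlip.ae_differentiableWithinAt_of_mem (μ := μ)))
  rintro y ⟨hy, hyu⟩ hdiff
  exact (Classical.not_imp.1 hy).2
    ((hdiff (interior_subset hyu)).differentiableAt (mem_interior_iff_mem_nhds.1 hyu))

theorem ConvexOn.ae_differentiableAt {f : E → ℝ} (hs : IsOpen s) (hf : ConvexOn ℝ s f) :
    ∀ᵐ x ∂μ.restrict s, DifferentiableAt ℝ f x :=
  (ae_restrict_iff' hs.measurableSet).2 ((hf.locallyLipschitzOn hs).ae_differentiableAt hs)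

end Rademacher

theorem DifferentiableAt.hasFDerivAt_of_eventuallyLE_of_eq {E : Type*} [NormedAddCommGroup E]
    [NormedSpace ℝ E] {f g : E → ℝ} {g' : E →L[ℝ] ℝ} {x : E}
    (hf : DifferentiableAt ℝ f x) (hg : HasFDerivAt g g' x) (hle : g ≤ᶠ[𝓝 x] f)
    (heq : g x = f x) : HasFDerivAt f g' x := by
  have hmin : IsLocalMin (f - g) x := by
    filter_upwards [hle] with y hy
    simp only [Pi.sub_apply, heq, sub_self, sub_nonneg, hy]
  have hzero := hmin.hasFDerivAt_eq_zero (hf.hasFDerivAt.sub hg)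
  exact sub_eq_zero.1 hzero ▸ hf.hasFDerivAt

theorem DifferentiableAt.hasDerivAt_of_eventuallyLE_of_eq {f g : ℝ → ℝ} {g' x : ℝ}
    (hf : DifferentiableAt ℝ f x) (hg : HasDerivAt g g' x) (hle : g ≤ᶠ[𝓝 x] f)
    (heq : g x = f x) : HasDerivAt f g' x :=
  hasDerivAt_iff_hasFDerivAt.2 (hf.hasFDerivAt_of_eventuallyLE_of_eq hg.hasFDerivAt hle heq)

/-- **Lemma (invariance from differentiation of the value function).**
If `f t := sup_{x ∈ 𝒟} (p x + t q x)` is finite and attained for every `t` in an open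
interval `I`, then `f` is convex on `I` and, for Lebesgue-a.e. `t ∈ I`, `f` is differentiable
at `t` with `f'(t) = q x⋆` for every maximizer `x⋆`; in particular all maximizers at such `t`
share the same values of `q` and of `p`. -/
theorem statement10
    {D : Type*} [Nonempty D] (p q : D → ℝ) (I : Set ℝ)
    (hIopen : IsOpen I) (hIconv : Convex ℝ I)
    (hattain : ∀ t ∈ I, ∃ x : D, ∀ y : D, p y + t * q y ≤ p x + t * q x) :
    ConvexOn ℝ I (fun t => ⨆ x : D, (p x + t * q x)) ∧
      ∀ᵐ t ∂(MeasureTheory.volume.restrict I),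
        (∀ x : D, (∀ y : D, p y + t * q y ≤ p x + t * q x) →
            HasDerivAt (fun s => ⨆ x : D, (p x + s * q x)) (q x) t) ∧
        (∀ x x' : D, (∀ y : D, p y + t * q y ≤ p x + t * q x) →
            (∀ y : D, p y + t * q y ≤ p x' + t * q x') → q x = q x' ∧ p x = p x') := by
  have hbdd : ∀ t ∈ I, BddAbove (range fun x => p x + t * q x) := fun t ht =>
    let ⟨x, hx⟩ := hattain t ht
    ⟨p x + t * q x, forall_mem_range.2 hx⟩
  have hconv : ConvexOn ℝ I fun t => ⨆ x, p x + t * q x := ConvexOn.ciSup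
    (fun x => (convexOn_const (p x) hIconv).add
      ((LinearMap.id.smulRight (q x) : ℝ →ₗ[ℝ] ℝ).convexOn hIconv)) hbdd
  refine ⟨hconv, ?_⟩
  filter_upwards [hconv.ae_differentiableAt hIopen, ae_restrict_mem hIopen.measurableSet]
    with t hdiff htI
  have hderiv : ∀ x, (∀ y, p y + t * q y ≤ p x + t * q x) →
      HasDerivAt (fun s => ⨆ x, p x + s * q x) (q x) t := fun x hx =>
    hdiff.hasDerivAt_of_eventuallyLE_of_eq ((hasDerivAt_mul_const (q x)).const_add (p x))
      (eventually_of_mem (hIopen.mem_nhds htI) fun s hs => le_ciSup (hbdd s hs) x)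
      (ciSup_eq_of_forall_le_of_forall_lt_exists_gt hx fun _ hw => ⟨x, hw⟩).symm
  refine ⟨hderiv, fun x x' hx hx' => ?_⟩
  have hq : q x = q x' := (hderiv x hx).unique (hderiv x' hx')
  have hle := hx x'
  have hge := hx' x
  rw [hq] at hle hge
  exact ⟨hq, by linarith⟩

end
end

section
/- Let l ≥ 2 and for each i = 1,…,l let P_{X_i} be a Borel probability measure on ℝ and (P^{(n)}_{X_i})_{n ≥ 1} Borel probability measures on ℝ converging weakly to P_{X_i} as n → ∞. If P_X is a Borel probability measure on ℝ^l whose i-th coordinate marginal is P_{X_i} for each i, then there exist a strictly increasing sequence of indices (n_k)_{k ≥ 1} and Borel probability measures P^{(n_k)}_X on ℝ^l, each having i-th coordinate marginal P^{(n_k)}_{X_i} for every i, such that P^{(n_k)}_X converges weakly to P_X as k → ∞. -/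
/-!
Let `F_i` and `F^{(n)}_i` be the cdfs of `P_{X_i}` and `P^{(n)}_{X_i}`. If `X ∼ P_X` and `V` is
an independent vector of uniform variables, the distributional transforms
`U_i = F_i(X_i-) + V_i (F_i(X_i) - F_i(X_i-))` are uniform on `(0, 1)` and recover `X_i` as
`X_i = F_i⁻¹(U_i)` almost surely. The vector `Y^n = (F^{(n)}_i⁻¹(U_i))_i` then has marginals
`P^{(n)}_{X_i}`. Weak convergence of the marginals makes `F^{(n)}_i⁻¹(u) → F_i⁻¹(u)` at every
continuity point `u` of the monotone function `F_i⁻¹`, i.e. for all but countably many `u`, so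
`Y^n → X` almost surely and hence in distribution.
-/

open MeasureTheory

noncomputable section

open ProbabilityTheory Set Filter Function
open scoped Topology ENNReal

namespace Coupling

def unif : Measure ℝ := volume.restrict (Ioo 0 1)

instance : IsProbabilityMeasure unif :=
  ⟨by simp [unif]⟩

instance : NullSingletonClass unif := by
  rw [unif]; infer_instance

lemma ae_mem_Ioo_unif : ∀ᵐ v ∂unif, v ∈ Ioo (0 : ℝ) 1 :=
  ae_restrict_mem measurableSet_Ioo

lemma unif_Iic {t : ℝ} (h1 : t ≤ 1) : unif (Iic t) = ENNReal.ofReal t := by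
  rw [unif, Measure.restrict_apply measurableSet_Iic]
  apply le_antisymm
  · calc volume (Iic t ∩ Ioo 0 1) ≤ volume (Ioc 0 t) :=
          measure_mono fun v hv => ⟨hv.2.1, hv.1⟩
      _ = ENNReal.ofReal t := by simp
  · calc ENNReal.ofReal t = volume (Ioo 0 t) := by simp
      _ ≤ volume (Iic t ∩ Ioo 0 1) :=
          measure_mono fun v hv => ⟨hv.2.le, hv.1, hv.2.trans_le h1⟩

lemma eq_unif_of_Iic {ν : Measure ℝ} [IsProbabilityMeasure ν] (h01 : ∀ᵐ v ∂ν, v ∈ Ioo 0 1)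
    (hIic : ∀ w ∈ Ioo (0 : ℝ) 1, ν (Iic w) = ENNReal.ofReal w) : ν = unif := by
  refine Measure.ext_of_Iic _ _ fun w => ?_
  by_cases hw : w ∈ Ioo 0 1
  · rw [hIic w hw, unif_Iic hw.2.le]
  rcases not_and_or.mp hw with hw0 | hw1
  · have hsub : Iic w ⊆ (Ioo 0 1)ᶜ := fun v hv hv' => hw0 (hv'.1.trans_le hv)
    rw [measure_mono_null hsub (mem_ae_iff.mp h01),
      measure_mono_null hsub (mem_ae_iff.mp ae_mem_Ioo_unif)]
  · have hsup : Ioo 0 1 ⊆ Iic w := fun v hv => hv.2.le.trans (not_lt.mp hw1)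
    rw [(ae_mem_iff_measure_eq measurableSet_Iic.nullMeasurableSet).mp (h01.mono hsup),
      (ae_mem_iff_measure_eq measurableSet_Iic.nullMeasurableSet).mp
        (ae_mem_Ioo_unif.mono hsup), measure_univ, measure_univ]

/-- The quantile function of `μ`, with junk value `0` outside `(0, 1)`. -/
def quantile (μ : Measure ℝ) (u : ℝ) : ℝ :=
  if u ∈ Ioo 0 1 then sInf {x | u ≤ cdf μ x} else 0

variable {μ : Measure ℝ} {u x : ℝ}

lemma quantile_le_iff (hu : u ∈ Ioo 0 1) : quantile μ u ≤ x ↔ u ≤ cdf μ x := by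
  have hne : {y | u ≤ cdf μ y}.Nonempty :=
    ((tendsto_cdf_atTop μ).eventually (eventually_ge_nhds hu.2)).exists
  obtain ⟨b, hb⟩ := ((tendsto_cdf_atBot μ).eventually (eventually_lt_nhds hu.1)).exists
  have hbdd : BddBelow {y | u ≤ cdf μ y} :=
    ⟨b, fun y hy => not_lt.mp fun hyb => (hy.trans (monotone_cdf μ hyb.le)).not_gt hb⟩
  rw [quantile, if_pos hu]
  refine ⟨fun h => ?_, fun h => csInf_le hbdd h⟩
  have hcont : ContinuousWithinAt (cdf μ) {y | u ≤ cdf μ y} (sInf {y | u ≤ cdf μ y}) :=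
    ((cdf μ).right_continuous _).mono fun y hy => csInf_le hbdd hy
  have hmem := closure_minimal (image_subset_iff.mpr fun y hy => hy) isClosed_Ici
    (hcont.mem_closure_image (csInf_mem_closure hne hbdd))
  exact le_trans hmem (monotone_cdf μ h)

lemma lt_quantile_iff (hu : u ∈ Ioo 0 1) : x < quantile μ u ↔ cdf μ x < u := by
  simpa only [not_le] using (quantile_le_iff (μ := μ) (x := x) hu).not

lemma le_cdf_quantile (hu : u ∈ Ioo 0 1) : u ≤ cdf μ (quantile μ u) :=
  (quantile_le_iff hu).mp le_rfl

lemma quantile_eq_of_forall_lt_of_le (hu : u ∈ Ioo 0 1) (hlt : ∀ y < x, cdf μ y < u)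
    (hle : u ≤ cdf μ x) : quantile μ u = x :=
  le_antisymm ((quantile_le_iff hu).mpr hle)
    (not_lt.mp fun h => (hlt _ h).not_ge (le_cdf_quantile hu))

lemma leftLim_cdf_quantile_le (hu : u ∈ Ioo 0 1) :
    leftLim (cdf μ) (quantile μ u) ≤ u :=
  le_of_tendsto ((monotone_cdf μ).tendsto_leftLim _)
    (eventually_nhdsWithin_of_forall fun _ hy => ((lt_quantile_iff hu).mp hy).le)

lemma monotoneOn_quantile : MonotoneOn (quantile μ) (Ioo 0 1) := fun _ hu _ hv huv =>
  (quantile_le_iff hu).mpr (huv.trans (le_cdf_quantile hv))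

lemma measurable_quantile : Measurable (quantile μ) := by
  refine measurable_of_restrict_of_restrict_compl (s := Ioo 0 1) measurableSet_Ioo ?_ ?_
  · exact Monotone.measurable fun u v huv => monotoneOn_quantile u.2 v.2 huv
  · have : (Ioo (0 : ℝ) 1)ᶜ.domRestrict (quantile μ) = fun _ => 0 := by
      ext u; exact if_neg u.2
    rw [this]; exact measurable_const

lemma map_quantile_unif [IsProbabilityMeasure μ] : unif.map (quantile μ) = μ := by
  have := Measure.isProbabilityMeasure_map (μ := unif) (measurable_quantile (μ := μ)).aemeasurable
  refine Measure.ext_of_Iic _ _ fun x => ?_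
  rw [Measure.map_apply measurable_quantile measurableSet_Iic, ← ofReal_cdf,
    ← unif_Iic (cdf_le_one μ x), unif, Measure.restrict_apply' measurableSet_Ioo,
    Measure.restrict_apply' measurableSet_Ioo]
  congr 1
  ext u
  exact and_congr_left fun hu => quantile_le_iff hu

lemma ae_continuousAt_quantile (μ : Measure ℝ) : ∀ᵐ u ∂unif, ContinuousAt (quantile μ) u := by
  filter_upwards [ae_mem_Ioo_unif,
    monotoneOn_quantile.countable_not_continuousWithinAt.ae_notMem unif] with u hu hcont
  exact (continuousWithinAt_iff_continuousAt (Ioo_mem_nhds hu.1 hu.2)).mp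
    (not_not.mp fun h => hcont ⟨hu, h⟩)

lemma tendsto_quantile {ι : Type*} {L : Filter ι} {μ : ProbabilityMeasure ℝ}
    {μs : ι → ProbabilityMeasure ℝ} (hμs : Tendsto μs L (𝓝 μ)) {u : ℝ} (hu : u ∈ Ioo 0 1)
    (hcont : ContinuousAt (quantile μ) u) :
    Tendsto (fun i => quantile (μs i) u) L (𝓝 (quantile μ u)) := by
  have hnear : ∀ᶠ u' in 𝓝 u, u' ∈ Ioo 0 1 := Ioo_mem_nhds hu.1 hu.2
  refine tendsto_order.2 ⟨fun a ha => ?_, fun b hb => ?_⟩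
  · have hleft : ∀ᶠ u' in 𝓝[<] u, (a < quantile μ u' ∧ u' ∈ Ioo 0 1) ∧ u' < u :=
      (((hcont.eventually (eventually_gt_nhds ha)).and hnear).filter_mono
        nhdsWithin_le_nhds).and self_mem_nhdsWithin
    obtain ⟨u', ⟨hau', hu'⟩, hu'u⟩ := hleft.exists
    have hlim : L.limsup (fun i => (μs i : Measure ℝ) (Iic a)) < ENNReal.ofReal u :=
      calc L.limsup (fun i => (μs i : Measure ℝ) (Iic a))
          ≤ (μ : Measure ℝ) (Iic a) :=
            ProbabilityMeasure.limsup_measure_closed_le_of_tendsto hμs isClosed_Iic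
        _ < ENNReal.ofReal u := by
            rw [← ofReal_cdf, ENNReal.ofReal_lt_ofReal_iff hu.1]
            exact ((lt_quantile_iff hu').mp hau').trans hu'u
    filter_upwards [eventually_lt_of_limsup_lt hlim] with i hi
    rw [← ofReal_cdf, ENNReal.ofReal_lt_ofReal_iff hu.1] at hi
    exact (lt_quantile_iff hu).mpr hi
  · have hright : ∀ᶠ u' in 𝓝[>] u, (quantile μ u' < b ∧ u' ∈ Ioo 0 1) ∧ u < u' :=
      (((hcont.eventually (eventually_lt_nhds hb)).and hnear).filter_mono
        nhdsWithin_le_nhds).and self_mem_nhdsWithin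
    obtain ⟨u', ⟨hu'b, hu'⟩, huu'⟩ := hright.exists
    obtain ⟨b', hb'u', hb'b⟩ := exists_between hu'b
    have hlim : ENNReal.ofReal u < L.liminf (fun i => (μs i : Measure ℝ) (Iio b')) :=
      calc ENNReal.ofReal u < ENNReal.ofReal (cdf μ (quantile μ u')) := by
            rw [ENNReal.ofReal_lt_ofReal_iff_of_nonneg hu.1.le]
            exact huu'.trans_le (le_cdf_quantile hu')
        _ ≤ (μ : Measure ℝ) (Iio b') := by
            rw [ofReal_cdf]; exact measure_mono (Iic_subset_Iio.mpr hb'u')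
        _ ≤ L.liminf (fun i => (μs i : Measure ℝ) (Iio b')) :=
            ProbabilityMeasure.le_liminf_measure_open_of_tendsto hμs isOpen_Iio
    filter_upwards [eventually_lt_of_lt_liminf hlim] with i hi
    have hcdf : u ≤ cdf (μs i : Measure ℝ) b' := by
      rw [← ENNReal.ofReal_le_ofReal_iff (cdf_nonneg _ _), ofReal_cdf]
      exact hi.le.trans (measure_mono Iio_subset_Iic_self)
    exact ((quantile_le_iff hu).mpr hcdf).trans_lt hb'b

lemma leftLim_cdf_le (x : ℝ) : leftLim (cdf μ) x ≤ cdf μ x :=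
  (monotone_cdf μ).leftLim_le le_rfl

def distribTransform (μ : Measure ℝ) (p : ℝ × ℝ) : ℝ :=
  leftLim (cdf μ) p.1 + p.2 * (cdf μ p.1 - leftLim (cdf μ) p.1)

lemma measurable_distribTransform : Measurable (distribTransform μ) := by
  have hL := (monotone_cdf μ).leftLim.measurable
  have hF := (monotone_cdf μ).measurable
  exact (hL.comp measurable_fst).add
    (measurable_snd.mul ((hF.comp measurable_fst).sub (hL.comp measurable_fst)))

lemma distribTransform_le_cdf {v : ℝ} (hv : v ≤ 1) : distribTransform μ (x, v) ≤ cdf μ x := by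
  have : v * (cdf μ x - leftLim (cdf μ) x) ≤ cdf μ x - leftLim (cdf μ) x :=
    mul_le_of_le_one_left (sub_nonneg.mpr (leftLim_cdf_le x)) hv
  simp only [distribTransform]; linarith

lemma distribTransform_quantile {v : ℝ} (hu : u ∈ Ioo 0 1) (hv : v ∈ Ioo 0 1) :
    distribTransform μ (quantile μ u, v) ∈ Ioo 0 1 ∧
      quantile μ (distribTransform μ (quantile μ u, v)) = quantile μ u := by
  set x := quantile μ u
  set w := distribTransform μ (x, v) with hw
  obtain ⟨hlt, hw1⟩ : (∀ y < x, cdf μ y < w) ∧ w < 1 := by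
    rcases (leftLim_cdf_le x).lt_or_eq with hjump | hcont
    · have hjump' := sub_pos.mpr hjump
      have hpos := mul_pos hv.1 hjump'
      have hlt1 := mul_lt_of_lt_one_left hjump' hv.2
      refine ⟨fun y hy => ((monotone_cdf μ).le_leftLim hy).trans_lt ?_, ?_⟩
      · simp only [hw, distribTransform]; linarith
      · have := cdf_le_one μ x
        simp only [hw, distribTransform]; linarith
    · have hwF : w = cdf μ x := by
        simp only [hw, distribTransform, hcont, sub_self, mul_zero, add_zero]
      refine ⟨fun y hy => ((lt_quantile_iff hu).mp hy).trans_le ?_, ?_⟩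
      · rw [hwF]; exact le_cdf_quantile hu
      · rw [hwF, ← hcont]; exact (leftLim_cdf_quantile_le hu).trans_lt hu.2
  have hw0 : 0 < w := (cdf_nonneg μ (x - 1)).trans_lt (hlt _ (sub_one_lt x))
  exact ⟨⟨hw0, hw1⟩,
    quantile_eq_of_forall_lt_of_le ⟨hw0, hw1⟩ hlt (distribTransform_le_cdf hv.2.le)⟩

lemma ae_quantile_distribTransform [IsProbabilityMeasure μ] :
    ∀ᵐ p ∂(μ.prod unif), distribTransform μ p ∈ Ioo 0 1 ∧
      quantile μ (distribTransform μ p) = p.1 := by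
  have hQ : Measurable (Prod.map (quantile μ) (id : ℝ → ℝ)) :=
    measurable_quantile.prodMap measurable_id
  have hmap : (unif.prod unif).map (Prod.map (quantile μ) id) = μ.prod unif := by
    rw [← Measure.map_prod_map _ _ measurable_quantile measurable_id, map_quantile_unif,
      Measure.map_id]
  have hmeas : MeasurableSet {p : ℝ × ℝ | distribTransform μ p ∈ Ioo 0 1 ∧
      quantile μ (distribTransform μ p) = p.1} :=
    (measurable_distribTransform measurableSet_Ioo).inter
      (measurableSet_eq_fun (measurable_quantile.comp measurable_distribTransform) measurable_fst)
  rw [← hmap, ae_map_iff hQ.aemeasurable hmeas]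
  filter_upwards [Measure.quasiMeasurePreserving_fst.ae ae_mem_Ioo_unif,
    Measure.quasiMeasurePreserving_snd.ae ae_mem_Ioo_unif] with p hu hv
  exact distribTransform_quantile hu hv

lemma unif_distribTransform_le_mul_measure_singleton [IsProbabilityMeasure μ] {w : ℝ}
    (hLw : leftLim (cdf μ) x ≤ w) (hwF : w ≤ cdf μ x) :
    unif {v | distribTransform μ (x, v) ≤ w} * μ {x} =
      ENNReal.ofReal (w - leftLim (cdf μ) x) := by
  have hatom : μ {x} = ENNReal.ofReal (cdf μ x - leftLim (cdf μ) x) := by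
    rw [← StieltjesFunction.measure_singleton, measure_cdf]
  rw [hatom]
  rcases (leftLim_cdf_le (μ := μ) x).eq_or_lt with hcont | hjump
  · simp [← hcont, le_antisymm (hcont ▸ hwF) hLw]
  · have hΔ := sub_pos.mpr hjump
    have hset : {v | distribTransform μ (x, v) ≤ w} =
        Iic ((w - leftLim (cdf μ) x) / (cdf μ x - leftLim (cdf μ) x)) := by
      ext v
      rw [mem_ofPred_eq, mem_Iic, le_div_iff₀ hΔ, distribTransform]
      constructor <;> intro h <;> linarith
    rw [hset, unif_Iic (div_le_one_of_le₀ (by linarith) hΔ.le),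
      ← ENNReal.ofReal_mul (div_nonneg (sub_nonneg.mpr hLw) hΔ.le), div_mul_cancel₀ _ hΔ.ne']

lemma prod_unif_setOf_distribTransform_le [IsProbabilityMeasure μ] {w : ℝ} (hw : w ∈ Ioo 0 1) :
    (μ.prod unif) {p | distribTransform μ p ≤ w} = ENNReal.ofReal w := by
  set q := quantile μ w
  have hslice : ∀ x, MeasurableSet {v | distribTransform μ (x, v) ≤ w} := fun x =>
    measurableSet_le (measurable_distribTransform.comp measurable_prodMk_left) measurable_const
  -- Below `q` the slices are full, above it they are null, and only an atom at `q` contributes.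
  have hae : (fun x => unif (Prod.mk x ⁻¹' {p | distribTransform μ p ≤ w})) =ᵐ[μ]
      fun x => (Iio q).indicator 1 x +
        ({q} : Set ℝ).indicator (fun x => unif {v | distribTransform μ (x, v) ≤ w}) x := by
    filter_upwards [Measure.ae_ae_of_ae_prod ae_quantile_distribTransform] with x hx
    rcases lt_trichotomy x q with hxq | rfl | hqx
    · have hall : ∀ᵐ v ∂unif, v ∈ {v | distribTransform μ (x, v) ≤ w} :=
        ae_mem_Ioo_unif.mono fun v hv =>
          (distribTransform_le_cdf hv.2.le).trans ((lt_quantile_iff hw).mp hxq).le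
      simp [hxq, hxq.ne,
        ((ae_mem_iff_measure_eq (hslice x).nullMeasurableSet).mp hall).trans measure_univ]
    · simp
    · have hnone : unif {v | distribTransform μ (x, v) ≤ w} = 0 := by
        refine measure_eq_zero_iff_ae_notMem.mpr (hx.mono fun v hv hle => hqx.not_ge ?_)
        rw [← hv.2]
        exact monotoneOn_quantile hv.1 hw hle
      simp [hqx.not_gt, hqx.ne', hnone]
  rw [Measure.prod_apply (measurableSet_le measurable_distribTransform measurable_const),
    lintegral_congr_ae hae, lintegral_add_left (measurable_one.indicator measurableSet_Iio),
    lintegral_indicator_one measurableSet_Iio, lintegral_indicator (measurableSet_singleton q),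
    lintegral_singleton, unif_distribTransform_le_mul_measure_singleton
      (leftLim_cdf_quantile_le hw) (le_cdf_quantile hw)]
  have hbelow : μ (Iio q) = ENNReal.ofReal (leftLim (cdf μ) q) := by
    rw [← sub_zero (leftLim (cdf μ) q), ← (cdf μ).measure_Iio (tendsto_cdf_atBot μ), measure_cdf]
  rw [hbelow, ← ENNReal.ofReal_add
    ((cdf_nonneg μ _).trans ((monotone_cdf μ).le_leftLim (sub_one_lt q)))
    (sub_nonneg.mpr (leftLim_cdf_quantile_le hw)), add_sub_cancel]

lemma map_distribTransform [IsProbabilityMeasure μ] :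
    (μ.prod unif).map (distribTransform μ) = unif := by
  have := Measure.isProbabilityMeasure_map (μ := μ.prod unif)
    (measurable_distribTransform (μ := μ)).aemeasurable
  refine eq_unif_of_Iic ?_ fun w hw => ?_
  · exact (ae_map_iff measurable_distribTransform.aemeasurable measurableSet_Ioo).mpr
      (ae_quantile_distribTransform.mono fun p hp => hp.1)
  · rw [Measure.map_apply measurable_distribTransform measurableSet_Iic]
    exact prod_unif_setOf_distribTransform_le hw

section Construction

variable {ι : Type*}

lemma measurable_coord_pair (i : ι) :
    Measurable fun ω : (ι → ℝ) × (ι → ℝ) => (ω.1 i, ω.2 i) :=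
  (measurable_pi_apply i).prodMap (measurable_pi_apply i)

def couplingSpace [Fintype ι] (PX : Measure (ι → ℝ)) : Measure ((ι → ℝ) × (ι → ℝ)) :=
  PX.prod (Measure.pi fun _ => unif)

instance [Fintype ι] (PX : Measure (ι → ℝ)) [IsProbabilityMeasure PX] :
    IsProbabilityMeasure (couplingSpace PX) := by
  rw [couplingSpace]; infer_instance

def uniformCoord (P : ι → Measure ℝ) (i : ι) (ω : (ι → ℝ) × (ι → ℝ)) : ℝ :=
  distribTransform (P i) (ω.1 i, ω.2 i)

lemma measurable_uniformCoord (P : ι → Measure ℝ) (i : ι) : Measurable (uniformCoord P i) :=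
  measurable_distribTransform.comp (measurable_coord_pair i)

variable [Fintype ι] {P : ι → Measure ℝ} {PX : Measure (ι → ℝ)} [IsProbabilityMeasure PX]

lemma map_coord_pair_couplingSpace (hmarg : ∀ i, PX.map (fun x => x i) = P i) (i : ι) :
    (couplingSpace PX).map (fun ω => (ω.1 i, ω.2 i)) = (P i).prod unif := by
  change (couplingSpace PX).map (Prod.map (fun x => x i) (fun x => x i)) = _
  rw [couplingSpace, ← Measure.map_prod_map _ _ (measurable_pi_apply i) (measurable_pi_apply i),
    hmarg i, (measurePreserving_eval _ i).map_eq]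

lemma map_uniformCoord [∀ i, IsProbabilityMeasure (P i)]
    (hmarg : ∀ i, PX.map (fun x => x i) = P i) (i : ι) :
    (couplingSpace PX).map (uniformCoord P i) = unif := by
  change (couplingSpace PX).map (distribTransform (P i) ∘ fun ω => (ω.1 i, ω.2 i)) = _
  rw [← Measure.map_map measurable_distribTransform (measurable_coord_pair i),
    map_coord_pair_couplingSpace hmarg, map_distribTransform]

lemma ae_quantile_uniformCoord [∀ i, IsProbabilityMeasure (P i)]
    (hmarg : ∀ i, PX.map (fun x => x i) = P i) :
    ∀ᵐ ω ∂couplingSpace PX, ∀ i,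
      uniformCoord P i ω ∈ Ioo 0 1 ∧ quantile (P i) (uniformCoord P i ω) = ω.1 i := by
  rw [ae_all_iff]
  intro i
  have h := ae_quantile_distribTransform (μ := P i)
  rw [← map_coord_pair_couplingSpace hmarg i] at h
  exact ae_of_ae_map (measurable_coord_pair i).aemeasurable h

theorem exists_couplings_tendsto [∀ i, IsProbabilityMeasure (P i)]
    (Pn : ℕ → ι → Measure ℝ) [∀ n i, IsProbabilityMeasure (Pn n i)]
    (hweak : ∀ i, ∀ f : BoundedContinuousFunction ℝ ℝ,
      Tendsto (fun n => ∫ x, f x ∂(Pn n i)) atTop (𝓝 (∫ x, f x ∂(P i))))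
    (hmarg : ∀ i, PX.map (fun x => x i) = P i) :
    ∃ Pk : ℕ → Measure (ι → ℝ), (∀ k, IsProbabilityMeasure (Pk k)) ∧
      (∀ k i, (Pk k).map (fun x => x i) = Pn k i) ∧
      ∀ f : BoundedContinuousFunction (ι → ℝ) ℝ,
        Tendsto (fun k => ∫ x, f x ∂(Pk k)) atTop (𝓝 (∫ x, f x ∂PX)) := by
  set T : ℕ → (ι → ℝ) × (ι → ℝ) → ι → ℝ := fun n ω i => quantile (Pn n i) (uniformCoord P i ω)
  have hT : ∀ n, Measurable (T n) := fun n =>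
    measurable_pi_lambda _ fun i => measurable_quantile.comp (measurable_uniformCoord P i)
  have hcont : ∀ᵐ ω ∂couplingSpace PX, ∀ i,
      ContinuousAt (quantile (P i)) (uniformCoord P i ω) :=
    ae_all_iff.mpr fun i => ae_of_ae_map (measurable_uniformCoord P i).aemeasurable
      (by rw [map_uniformCoord hmarg]; exact ae_continuousAt_quantile _)
  have hweak' : ∀ i, Tendsto (β := ProbabilityMeasure ℝ) (fun n => ⟨Pn n i, inferInstance⟩)
      atTop (𝓝 ⟨P i, inferInstance⟩) := fun i =>
    ProbabilityMeasure.tendsto_iff_forall_integral_tendsto.mpr (hweak i)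
  have hlim : ∀ᵐ ω ∂couplingSpace PX, Tendsto (fun n => T n ω) atTop (𝓝 ω.1) := by
    filter_upwards [ae_quantile_uniformCoord hmarg, hcont] with ω hω hc
    refine tendsto_pi_nhds.mpr fun i => ?_
    rw [← (hω i).2]
    exact tendsto_quantile (hweak' i) (hω i).1 (hc i)
  refine ⟨fun n => (couplingSpace PX).map (T n),
    fun n => Measure.isProbabilityMeasure_map (hT n).aemeasurable, fun n i => ?_, ?_⟩
  · change ((couplingSpace PX).map (T n)).map (Function.eval i) = _
    rw [Measure.map_map (measurable_pi_apply i) (hT n)]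
    change (couplingSpace PX).map (quantile (Pn n i) ∘ uniformCoord P i) = _
    rw [← Measure.map_map measurable_quantile (measurable_uniformCoord P i),
      map_uniformCoord hmarg, map_quantile_unif]
  · have hfst : (couplingSpace PX).map Prod.fst = PX := by
      simp [couplingSpace]
    have := ProbabilityMeasure.tendsto_iff_forall_integral_tendsto.mp
      (tendstoInDistribution_of_ae_tendsto (fun n => (hT n).aemeasurable)
        measurable_fst.aemeasurable hlim).tendsto
    simpa [hfst] using this

end Construction

end Coupling

open Coupling

theorem statement15_general {l : ℕ}
    (P : Fin l → Measure ℝ) (Pn : ℕ → Fin l → Measure ℝ)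
    (hP : ∀ i, IsProbabilityMeasure (P i)) (hPn : ∀ n i, IsProbabilityMeasure (Pn n i))
    (hweak : ∀ i, ∀ f : BoundedContinuousFunction ℝ ℝ,
      Filter.Tendsto (fun n => ∫ x, f x ∂(Pn n i)) Filter.atTop (nhds (∫ x, f x ∂(P i))))
    (PX : Measure (Fin l → ℝ)) (hPX : IsProbabilityMeasure PX)
    (hmarg : ∀ i, PX.map (fun x => x i) = P i) :
    ∃ nk : ℕ → ℕ, StrictMono nk ∧ ∃ Pk : ℕ → Measure (Fin l → ℝ),
      (∀ k, IsProbabilityMeasure (Pk k)) ∧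
      (∀ k i, (Pk k).map (fun x => x i) = Pn (nk k) i) ∧
      ∀ f : BoundedContinuousFunction (Fin l → ℝ) ℝ,
        Filter.Tendsto (fun k => ∫ x, f x ∂(Pk k)) Filter.atTop (nhds (∫ x, f x ∂PX)) := by
  obtain ⟨Pk, hprob, hmargk, hconv⟩ := exists_couplings_tendsto Pn hweak hmarg
  exact ⟨id, strictMono_id, Pk, hprob, hmargk, hconv⟩

/-- **Weak stability of couplings (Lemma 21).** If the marginals `P^{(n)}_{X_i}` converge weakly
to `P_{X_i}` and `P_X` is a coupling of the limits, then along a subsequence there are couplings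
of the `P^{(n)}_{X_i}` converging weakly to `P_X`. -/
theorem statement15 {l : ℕ} (hl : 2 ≤ l)
    (P : Fin l → Measure ℝ) (Pn : ℕ → Fin l → Measure ℝ)
    (hP : ∀ i, IsProbabilityMeasure (P i)) (hPn : ∀ n i, IsProbabilityMeasure (Pn n i))
    (hweak : ∀ i, ∀ f : BoundedContinuousFunction ℝ ℝ,
      Filter.Tendsto (fun n => ∫ x, f x ∂(Pn n i)) Filter.atTop (nhds (∫ x, f x ∂(P i))))
    (PX : Measure (Fin l → ℝ)) (hPX : IsProbabilityMeasure PX)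
    (hmarg : ∀ i, PX.map (fun x => x i) = P i) :
    ∃ nk : ℕ → ℕ, StrictMono nk ∧ ∃ Pk : ℕ → Measure (Fin l → ℝ),
      (∀ k, IsProbabilityMeasure (Pk k)) ∧
      (∀ k i, (Pk k).map (fun x => x i) = Pn (nk k) i) ∧
      ∀ f : BoundedContinuousFunction (Fin l → ℝ) ℝ,
        Filter.Tendsto (fun k => ∫ x, f x ∂(Pk k)) Filter.atTop (nhds (∫ x, f x ∂PX)) :=
  statement15_general P Pn hP hPn hweak PX hPX hmarg

end
end

section
/- Let A be a real topological vector space with topological dual A*, let k ≥ 1, and let Θ_j : A → ℝ ∪ {+∞} be convex functions for j = 0,1,…,k. Suppose there exist u_1,…,u_k ∈ A such that, setting u_0 := −(u_1 + ⋯ + u_k), one has Θ_j(u_j) < ∞ for all j = 0,…,k, and Θ_0 is upper semicontinuous at u_0. Then −inf_{ℓ ∈ A*} Σ_{j=0}^k Θ_j*(ℓ) = inf_{u_1,…,u_k ∈ A} [ Θ_0( −Σ_{j=1}^k u_j ) + Σ_{j=1}^k Θ_j(u_j) ]. -/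
/-!
The right-hand side is the value at `0` of the infimal convolution `φ = Θ₀ □ ⋯ □ Θₖ`, and the
left-hand side is its biconjugate at `0`, because the conjugate of an infimal convolution is the
sum of the conjugates. The strict epigraph of `φ` is convex, and by upper semicontinuity of `Θ₀`
it contains a neighbourhood of `(0, t)` for every large `t`. Separating `(0, φ 0)` from the interior
of the epigraph by Hahn–Banach gives a non-vertical hyperplane, that is, a continuous subgradient
`ℓ` of `φ` at `0`; then `φ*(ℓ) = -φ 0`, and weak duality gives the other inequality.
-/

open Finset

namespace EReal

variable {ι : Type*}

lemma coe_finset_sum (s : Finset ι) (g : ι → ℝ) :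
    ((∑ i ∈ s, g i : ℝ) : EReal) = ∑ i ∈ s, (g i : EReal) :=
  map_sum (⟨⟨Real.toEReal, coe_zero⟩, coe_add⟩ : ℝ →+ EReal) g s

lemma sum_ne_bot {s : Finset ι} {f : ι → EReal} (h : ∀ i ∈ s, f i ≠ ⊥) : ∑ i ∈ s, f i ≠ ⊥ :=
  fun hs => by obtain ⟨i, hi, hfi⟩ := WithBot.sum_eq_bot_iff.mp hs; exact h i hi hfi

lemma sum_coe_sub {s : Finset ι} (r : ι → ℝ) {f : ι → EReal} (h : ∀ i ∈ s, f i ≠ ⊥) :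
    ∑ i ∈ s, ((r i : EReal) - f i) = ((∑ i ∈ s, r i : ℝ) : EReal) - ∑ i ∈ s, f i := by
  classical
  induction s using Finset.induction with
  | empty => simp
  | insert a s has ih =>
    have hs : ∑ i ∈ s, f i ≠ ⊥ := sum_ne_bot fun i hi => h i (mem_insert_of_mem hi)
    rw [sum_insert has, sum_insert has, sum_insert has, ih fun i hi => h i (mem_insert_of_mem hi),
      coe_add, sub_eq_add_neg, sub_eq_add_neg, sub_eq_add_neg,
      neg_add (.inl (h a (mem_insert_self a s))) (.inr hs)]
    ac_rfl

lemma sum_iSup_le {α : Type*} [Nonempty α] [Fintype ι] (f : ι → α → EReal) {c : EReal}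
    (h : ∀ v : ι → α, ∑ i, f i (v i) ≤ c) : ∑ i, ⨆ a, f i a ≤ c := by
  classical
  suffices ∀ s : Finset ι, ∀ c : EReal, (∀ v : ι → α, ∑ i ∈ s, f i (v i) ≤ c) →
      ∑ i ∈ s, ⨆ a, f i a ≤ c from this univ c h
  intro s
  induction s using Finset.induction with
  | empty => intro c h; simpa using h (fun _ => Classical.arbitrary α)
  | insert i s hi ih =>
    intro c h
    rw [sum_insert hi]
    refine add_le_of_forall_lt fun x hx y hy => ?_
    obtain ⟨a, ha⟩ := lt_iSup_iff.mp hx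
    obtain ⟨v, hv⟩ : ∃ v : ι → α, y < ∑ j ∈ s, f j (v j) := by
      by_contra! hle
      exact (ih y hle).not_gt hy
    calc x + y ≤ f i a + ∑ j ∈ s, f j (v j) := add_le_add ha.le hv.le
      _ = ∑ j ∈ insert i s, f j (Function.update v i a j) := by
        rw [sum_insert hi, Function.update_self]
        congr 1
        exact sum_congr rfl fun j hj => by rw [Function.update_of_ne (ne_of_mem_of_not_mem hj hi)]
      _ ≤ c := h _

lemma coe_sub_le_of_forall_lt {r : ℝ} {y c : EReal}
    (h : ∀ t : ℝ, y < t → ((r - t : ℝ) : EReal) ≤ c) : (r : EReal) - y ≤ c := by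
  induction y with
  | bot =>
    rw [sub_bot (coe_ne_bot r), ← ge_of_forall_gt_iff_ge]
    exact fun z _ => by simpa using h (r - z) (bot_lt_coe _)
  | coe y =>
    refine ge_of_forall_gt_iff_ge.mp fun z hz => ?_
    have hz' : z < r - y := by exact_mod_cast hz
    have := h (r - z) (by exact_mod_cast (by linarith : y < r - z))
    simpa using this
  | top => simp

lemma coe_mul_sum {a : ℝ} (ha : 0 ≤ a) (s : Finset ι) (f : ι → EReal) :
    (a : EReal) * ∑ i ∈ s, f i = ∑ i ∈ s, (a : EReal) * f i :=
  map_sum (⟨⟨((a : EReal) * ·), mul_zero _⟩,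
    left_distrib_of_nonneg_of_ne_top (EReal.coe_nonneg.mpr ha) (coe_ne_top a)⟩ : EReal →+ EReal) f s

end EReal

open Filter Topology Set

noncomputable section

section ERealConvex

variable {E : Type*} [AddCommGroup E] [Module ℝ E]

def ERealConvex (f : E → EReal) : Prop :=
  ∀ (u v : E) (a b : ℝ), 0 ≤ a → 0 ≤ b → a + b = 1 →
    f (a • u + b • v) ≤ (a : EReal) * f u + (b : EReal) * f v

def strictEpigraph (f : E → EReal) : Set (E × ℝ) := {p | f p.1 < p.2}

lemma ERealConvex.convex_strictEpigraph {f : E → EReal} (hf : ERealConvex f) :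
    Convex ℝ (strictEpigraph f) := by
  rintro ⟨u, t₁⟩ hu ⟨v, t₂⟩ hv a b ha hb hab
  obtain ⟨s₁, hus₁, hst₁⟩ := EReal.exists_between_coe_real hu
  obtain ⟨s₂, hvs₂, hst₂⟩ := EReal.exists_between_coe_real hv
  have hst₁ : s₁ < t₁ := by exact_mod_cast hst₁
  have hst₂ : s₂ < t₂ := by exact_mod_cast hst₂
  have hlt : a * s₁ + b * s₂ < a * t₁ + b * t₂ := by
    rcases ha.eq_or_lt with rfl | ha
    · simp only [zero_add] at hab; subst hab; linarith
    · nlinarith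
  show f (a • u + b • v) < ((a * t₁ + b * t₂ : ℝ) : EReal)
  calc f (a • u + b • v) ≤ (a : EReal) * f u + (b : EReal) * f v := hf u v a b ha hb hab
    _ ≤ (a : EReal) * s₁ + (b : EReal) * s₂ :=
      add_le_add (mul_le_mul_of_nonneg_left hus₁.le (EReal.coe_nonneg.mpr ha))
        (mul_le_mul_of_nonneg_left hvs₂.le (EReal.coe_nonneg.mpr hb))
    _ = ((a * s₁ + b * s₂ : ℝ) : EReal) := by norm_cast
    _ < _ := by exact_mod_cast hlt

lemma ERealConvex.sum {ι : Type*} [Fintype ι] {f : ι → E → EReal} (hf : ∀ i, ERealConvex (f i)) :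
    ERealConvex fun v : ι → E => ∑ i, f i (v i) := by
  intro u v a b ha hb hab
  calc ∑ i, f i ((a • u + b • v) i) ≤ ∑ i, ((a : EReal) * f i (u i) + (b : EReal) * f i (v i)) :=
        sum_le_sum fun i _ => hf i (u i) (v i) a b ha hb hab
    _ = (a : EReal) * ∑ i, f i (u i) + (b : EReal) * ∑ i, f i (v i) := by
        rw [sum_add_distrib, EReal.coe_mul_sum ha, EReal.coe_mul_sum hb]

end ERealConvex

section InfConv

variable {E ι : Type*} [AddCommMonoid E] [Fintype ι]

def infConv (Θ : ι → E → EReal) (x : E) : EReal := ⨅ (v : ι → E) (_ : ∑ i, v i = x), ∑ i, Θ i (v i)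

lemma infConv_le (Θ : ι → E → EReal) (v : ι → E) : infConv Θ (∑ i, v i) ≤ ∑ i, Θ i (v i) :=
  iInf_le_of_le v (iInf_le _ rfl)

lemma infConv_lt_iff {Θ : ι → E → EReal} {x : E} {t : EReal} :
    infConv Θ x < t ↔ ∃ v : ι → E, ∑ i, v i = x ∧ ∑ i, Θ i (v i) < t := by
  simp only [infConv, iInf_lt_iff, exists_prop]

end InfConv

section InfConvDuality

variable {E ι : Type*} [AddCommGroup E] [Module ℝ E] [Fintype ι]

lemma convex_strictEpigraph_infConv {Θ : ι → E → EReal} (hΘ : ∀ i, ERealConvex (Θ i)) :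
    Convex ℝ (strictEpigraph (infConv Θ)) := by
  rintro ⟨x₁, t₁⟩ h₁ ⟨x₂, t₂⟩ h₂ a b ha hb hab
  obtain ⟨v₁, rfl, hv₁⟩ := infConv_lt_iff.mp h₁
  obtain ⟨v₂, rfl, hv₂⟩ := infConv_lt_iff.mp h₂
  have hv := (ERealConvex.sum hΘ).convex_strictEpigraph (x := (v₁, t₁)) hv₁
    (y := (v₂, t₂)) hv₂ ha hb hab
  exact infConv_lt_iff.mpr ⟨a • v₁ + b • v₂, by simp [sum_add_distrib, smul_sum], hv⟩

variable [TopologicalSpace E]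

def fenchelConjugate (f : E → EReal) (ℓ : E →L[ℝ] ℝ) : EReal := ⨆ x, (ℓ x : EReal) - f x

lemma fenchelConjugate_infConv {Θ : ι → E → EReal} (hΘ : ∀ i x, Θ i x ≠ ⊥) (ℓ : E →L[ℝ] ℝ) :
    fenchelConjugate (infConv Θ) ℓ = ∑ i, fenchelConjugate (Θ i) ℓ := by
  have hsplit (v : ι → E) :
      ∑ i, ((ℓ (v i) : EReal) - Θ i (v i)) = (ℓ (∑ i, v i) : EReal) - ∑ i, Θ i (v i) := by
    rw [EReal.sum_coe_sub _ fun i _ => hΘ i (v i), map_sum]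
  refine le_antisymm (iSup_le fun x => EReal.coe_sub_le_of_forall_lt fun t ht => ?_)
    (EReal.sum_iSup_le _ fun v => ?_)
  · obtain ⟨v, rfl, hv⟩ := infConv_lt_iff.mp ht
    calc ((ℓ (∑ i, v i) - t : ℝ) : EReal) ≤ (ℓ (∑ i, v i) : EReal) - ∑ i, Θ i (v i) := by
          rw [EReal.coe_sub]; exact EReal.sub_le_sub le_rfl hv.le
      _ = ∑ i, ((ℓ (v i) : EReal) - Θ i (v i)) := (hsplit v).symm
      _ ≤ ∑ i, fenchelConjugate (Θ i) ℓ :=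
          sum_le_sum fun i _ => le_iSup (fun x => (ℓ x : EReal) - Θ i x) (v i)
  · rw [hsplit]
    exact (EReal.sub_le_sub le_rfl (infConv_le Θ v)).trans
      (le_iSup (fun x => (ℓ x : EReal) - infConv Θ x) _)

end InfConvDuality

section Subgradient

variable {E : Type*} [AddCommGroup E] [Module ℝ E] [TopologicalSpace E]
  [IsTopologicalAddGroup E] [ContinuousSMul ℝ E]

lemma exists_subgradient_of_eventually_lt {φ : E → EReal} (hφ : Convex ℝ (strictEpigraph φ))
    {x₀ : E} {M : ℝ} (hM : ∀ᶠ x in 𝓝 x₀, φ x < M) (hx₀ : φ x₀ ≠ ⊥) :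
    ∃ ℓ : E →L[ℝ] ℝ, ∀ x, (ℓ x : EReal) - φ x ≤ (ℓ x₀ : EReal) - φ x₀ := by
  lift φ x₀ to ℝ using ⟨(hM.self_of_nhds.trans (EReal.coe_lt_top M)).ne, hx₀⟩ with P hP
  have hint : ∀ t : ℝ, M < t → (x₀, t) ∈ interior (strictEpigraph φ) := fun t ht => by
    rw [mem_interior_iff_mem_nhds, nhds_prod_eq]
    exact (hM.prod_mk (Ioi_mem_nhds ht)).mono fun p hp => hp.1.trans (EReal.coe_lt_coe_iff.mpr hp.2)
  have hout : (x₀, P) ∉ interior (strictEpigraph φ) := fun h =>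
    lt_irrefl (φ x₀) (by simpa [strictEpigraph, hP] using interior_subset h)
  obtain ⟨f, hf⟩ := geometric_hahn_banach_open_point hφ.interior isOpen_interior hout
  -- `f` stays below `f (x₀, P)` on all of the epigraph, since it is the closure of its interior.
  have hfS : ∀ p ∈ strictEpigraph φ, f p ≤ f (x₀, P) := by
    intro p hp
    have hne : (interior (strictEpigraph φ)).Nonempty := ⟨_, hint (M + 1) (lt_add_one M)⟩
    have hcl : p ∈ closure (interior (strictEpigraph φ)) := by
      rw [hφ.closure_interior_eq_closure_of_nonempty_interior hne]; exact subset_closure hp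
    exact closure_minimal (fun q hq => (hf q hq).le) (isClosed_le f.continuous continuous_const) hcl
  have hsplit (x : E) (t : ℝ) : f (x, t) = f (x, 0) + t * f (0, 1) := by
    rw [← smul_eq_mul, ← map_smul, ← map_add]; simp
  set μ := f (0, 1)
  -- The separating hyperplane is not vertical, so it is the graph of an affine minorant.
  have hμ : μ < 0 := by
    have := hf _ (hint (max M P + 1) (by linarith [le_max_left M P]))
    rw [hsplit, hsplit x₀ P] at this
    nlinarith [le_max_right M P]
  refine ⟨(-μ)⁻¹ • f.comp (ContinuousLinearMap.inl ℝ E ℝ),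
    fun x => EReal.coe_sub_le_of_forall_lt fun t ht => ?_⟩
  have hft := hfS (x, t) ht
  rw [hsplit, hsplit x₀ P] at hft
  rw [← EReal.coe_sub, EReal.coe_le_coe_iff]
  simp only [smul_apply, ContinuousLinearMap.comp_apply,
    ContinuousLinearMap.inl_apply, smul_eq_mul]
  have hμ' : 0 < -μ := neg_pos.mpr hμ
  have hdiv : (-μ)⁻¹ * f (x, 0) - (-μ)⁻¹ * f (x₀, 0) ≤ t - P := by
    rw [← mul_sub, inv_mul_le_iff₀ hμ']; nlinarith
  linarith

lemma neg_iInf_fenchelConjugate_eq {φ : E → EReal} (hφ : Convex ℝ (strictEpigraph φ)) {M : ℝ}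
    (hM : ∀ᶠ x in 𝓝 0, φ x < M) : -(⨅ ℓ : E →L[ℝ] ℝ, fenchelConjugate φ ℓ) = φ 0 := by
  refine le_antisymm (EReal.neg_le.mpr (le_iInf fun ℓ => ?_)) ?_
  · simpa [fenchelConjugate] using le_iSup (fun x => (ℓ x : EReal) - φ x) 0
  rcases eq_or_ne (φ 0) ⊥ with h0 | h0
  · exact h0 ▸ bot_le
  obtain ⟨ℓ, hℓ⟩ := exists_subgradient_of_eventually_lt hφ hM h0
  refine EReal.le_neg_of_le_neg ((iInf_le _ ℓ).trans (iSup_le fun x => ?_))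
  simpa using hℓ x

end Subgradient

section FirstCoordinate

variable {E : Type*} [AddCommGroup E] {n : ℕ}

lemma infConv_eq_iInf_cons (Θ : Fin (n + 1) → E → EReal) (x : E) :
    infConv Θ x = ⨅ w : Fin n → E, Θ 0 (x - ∑ j, w j) + ∑ j, Θ j.succ (w j) := by
  refine le_antisymm (le_iInf fun w => ?_) (le_iInf₂ fun v hv => ?_)
  · simpa [Fin.sum_univ_succ] using infConv_le Θ (Fin.cons (x - ∑ j, w j) w)
  · refine (iInf_le _ (Fin.tail v)).trans_eq ?_
    simp [← hv, Fin.sum_univ_succ, Fin.tail]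

variable [TopologicalSpace E] [IsTopologicalAddGroup E]

lemma exists_eventually_infConv_lt {Θ : Fin (n + 1) → E → EReal} {y : E} {c : ℝ}
    (hy : ∀ᶠ y' in 𝓝 y, Θ 0 y' < c) {w : Fin n → E} (hw : ∀ j, Θ j.succ (w j) ≠ ⊤)
    (hw' : ∀ j, Θ j.succ (w j) ≠ ⊥) :
    ∃ M : ℝ, ∀ᶠ x in 𝓝 (y + ∑ j, w j), infConv Θ x < M := by
  have hsum : ∑ j, Θ j.succ (w j) = ((∑ j, (Θ j.succ (w j)).toReal : ℝ) : EReal) := by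
    rw [EReal.coe_finset_sum]
    exact sum_congr rfl fun j _ => (EReal.coe_toReal (hw j) (hw' j)).symm
  have hshift : Tendsto (· - ∑ j, w j) (𝓝 (y + ∑ j, w j)) (𝓝 y) := by
    simpa using (continuous_sub_right (∑ j, w j)).tendsto (y + ∑ j, w j)
  refine ⟨c + ∑ j, (Θ j.succ (w j)).toReal, (hshift.eventually hy).mono fun x hx => ?_⟩
  calc infConv Θ x ≤ Θ 0 (x - ∑ j, w j) + ∑ j, Θ j.succ (w j) :=
        (infConv_eq_iInf_cons Θ x).trans_le (iInf_le _ w)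
    _ < _ := by rw [hsum, EReal.coe_add]; exact EReal.add_lt_add_right_coe hx _

end FirstCoordinate

end

theorem statement19_general
    {A : Type*} [AddCommGroup A] [Module ℝ A] [TopologicalSpace A]
    [IsTopologicalAddGroup A] [ContinuousSMul ℝ A]
    {k : ℕ}
    (Θ : Fin (k + 1) → A → EReal)
    (hΘbot : ∀ j u, Θ j u ≠ ⊥)
    (hΘconvex : ∀ j (u v : A) (a b : ℝ), 0 ≤ a → 0 ≤ b → a + b = 1 →
      Θ j (a • u + b • v) ≤ (a : EReal) * Θ j u + (b : EReal) * Θ j v)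
    (u : Fin k → A)
    (hfin : ∀ j : Fin k, Θ j.succ (u j) < ⊤)
    (hfin0 : Θ 0 (-(∑ j, u j)) < ⊤)
    (husc : UpperSemicontinuousAt (Θ 0) (-(∑ j, u j))) :
    -(⨅ ℓ : A →L[ℝ] ℝ, ∑ j, (⨆ v : A, ((ℓ v : EReal) - Θ j v)))
      = ⨅ w : Fin k → A, (Θ 0 (-(∑ j, w j)) + ∑ j : Fin k, Θ j.succ (w j)) := by
  obtain ⟨c, hc, -⟩ := EReal.exists_between_coe_real hfin0
  obtain ⟨M, hM⟩ := exists_eventually_infConv_lt (husc c hc) (fun j => (hfin j).ne)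
    (fun j => hΘbot _ _)
  rw [neg_add_cancel] at hM
  have hconv := convex_strictEpigraph_infConv (Θ := Θ) hΘconvex
  calc -(⨅ ℓ : A →L[ℝ] ℝ, ∑ j, fenchelConjugate (Θ j) ℓ)
      = -(⨅ ℓ : A →L[ℝ] ℝ, fenchelConjugate (infConv Θ) ℓ) := by
        simp only [fenchelConjugate_infConv hΘbot]
    _ = infConv Θ 0 := neg_iInf_fenchelConjugate_eq hconv hM
    _ = _ := by simp [infConv_eq_iInf_cons]

/-- **A generalization of the Legendre–Fenchel / Fenchel–Rockafellar duality to more than two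
functions** (Theorem 25 in the paper). The Legendre–Fenchel transform of `Θ` at a continuous
linear functional `ℓ` is `⨆ u, (ℓ u - Θ u)`. -/
theorem statement19
    {A : Type*} [AddCommGroup A] [Module ℝ A] [TopologicalSpace A]
    [IsTopologicalAddGroup A] [ContinuousSMul ℝ A]
    {k : ℕ} (hk : 1 ≤ k)
    (Θ : Fin (k + 1) → A → EReal)
    (hΘbot : ∀ j u, Θ j u ≠ ⊥)
    (hΘconvex : ∀ j (u v : A) (a b : ℝ), 0 ≤ a → 0 ≤ b → a + b = 1 →
      Θ j (a • u + b • v) ≤ (a : EReal) * Θ j u + (b : EReal) * Θ j v)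
    (u : Fin k → A)
    (hfin : ∀ j : Fin k, Θ j.succ (u j) < ⊤)
    (hfin0 : Θ 0 (-(∑ j, u j)) < ⊤)
    (husc : UpperSemicontinuousAt (Θ 0) (-(∑ j, u j))) :
    -(⨅ ℓ : A →L[ℝ] ℝ, ∑ j, (⨆ v : A, ((ℓ v : EReal) - Θ j v)))
      = ⨅ w : Fin k → A, (Θ 0 (-(∑ j, w j)) + ∑ j : Fin k, Θ j.succ (w j)) :=
  statement19_general Θ hΘbot hΘconvex u hfin hfin0 husc
end
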